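/- The entailment {∃_{≤1}(o,p), ∃_{≤1}(o,p̄), ∃_{≤1}(q,ō), ∃_{>1}(q,r̄)} ⊨ ∃_{≤1}(q,r) holds: in every structure in which the four premises are true, the conclusion is true. -/

import Mathlib

/-- Literals over a set of atoms `P`: an atom or a negated atom. -/
inductive Lit (P : Type) : Type
  | pos (p : P)
  | neg (p : P)
deriving DecidableEq

/-- Formulas of the (extended) numerical syllogistic: `∃_{≤ i}(ℓ,m)` and `∃_{> i}(ℓ,m)`. -/
inductive Fm (P : Type) : Type
  | le (i : ℕ) (l m : Lit P)
  | gt (i : ℕ) (l m : Lit P)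
deriving DecidableEq

/-- Interpretation of a literal in a structure with domain `A` given by `I`. -/
def Lit.interp {P A : Type} (I : P → Set A) : Lit P → Set A
  | .pos p => I p
  | .neg p => (I p)ᶜ

/-- Truth of a formula in a structure: cardinality constraints on `ℓ^𝔄 ∩ m^𝔄`. -/
def Fm.sat {P A : Type} (I : P → Set A) : Fm P → Prop
  | .le i l m => Cardinal.mk ↥(l.interp I ∩ m.interp I) ≤ (i : Cardinal)
  | .gt i l m => (i : Cardinal) < Cardinal.mk ↥(l.interp I ∩ m.interp I)

/-- Semantic entailment: every structure (nonempty domain) satisfying `Θ` satisfies `ψ`. -/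
def Entails {P : Type} (Θ : Set (Fm P)) (ψ : Fm P) : Prop :=
  ∀ (A : Type) (_ : Nonempty A) (I : P → Set A), (∀ φ ∈ Θ, φ.sat I) → ψ.sat I

/-- The negation map, swapping `∃_{≤ i}` and `∃_{> i}`. -/
def Fm.negate {P : Type} : Fm P → Fm P
  | .le i l m => .gt i l m
  | .gt i l m => .le i l m

/-- Swap the (unordered) arguments of a formula. -/
def Fm.swap {P : Type} : Fm P → Fm P
  | .le i l m => .le i m l
  | .gt i l m => .gt i m l

/-- The numerical index of a formula. -/
def Fm.idx {P : Type} : Fm P → ℕ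
  | .le i _ _ => i
  | .gt i _ _ => i

/-- The atom of a literal. -/
def Lit.atom {P : Type} : Lit P → P
  | .pos p => p
  | .neg p => p

/-- The two (unordered) literal arguments of a formula. -/
def Fm.args {P : Type} : Fm P → Lit P × Lit P
  | .le _ l m => (l, m)
  | .gt _ l m => (l, m)

/-- All atoms of a formula lie in `S`. -/
def Fm.atomsIn {P : Type} (S : Set P) (φ : Fm P) : Prop :=
  φ.args.1.atom ∈ S ∧ φ.args.2.atom ∈ S

/-- Applying a substitution to a literal. -/
def Lit.map {P : Type} (g : P → P) : Lit P → Lit P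
  | .pos p => .pos (g p)
  | .neg p => .neg (g p)

/-- Applying a substitution to a formula. -/
def Fm.map {P : Type} (g : P → P) : Fm P → Fm P
  | .le i l m => .le i (l.map g) (m.map g)
  | .gt i l m => .gt i (l.map g) (m.map g)

/-- A syllogistic rule: a finite set of antecedents and a consequent. -/
structure Rule (P : Type) where
  ants : Finset (Fm P)
  con : Fm P

/-- The direct syllogistic derivation relation `⊢_X`. -/
inductive Derives {P : Type} (X : Set (Rule P)) : Set (Fm P) → Fm P → Prop
  | prem {Θ : Set (Fm P)} {θ : Fm P} : θ ∈ Θ → Derives X Θ θ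
  | rule {Θ : Set (Fm P)} (r : Rule P) (g : P → P) : r ∈ X →
      (∀ ψ ∈ r.ants, Derives X Θ (ψ.map g)) → Derives X Θ (r.con.map g)

/-- The indirect syllogistic derivation relation `⊩_X` (with reductio ad absurdum). -/
inductive IndDerives {P : Type} (X : Set (Rule P)) : Set (Fm P) → Fm P → Prop
  | prem {Θ : Set (Fm P)} {θ : Fm P} : θ ∈ Θ → IndDerives X Θ θ
  | rule {Θ : Set (Fm P)} (r : Rule P) (g : P → P) : r ∈ X →
      (∀ ψ ∈ r.ants, IndDerives X Θ (ψ.map g)) → IndDerives X Θ (r.con.map g)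
  | raa {Θ : Set (Fm P)} {θ : Fm P} (i : ℕ) (p : P) :
      IndDerives X (insert θ Θ) (Fm.gt i (Lit.pos p) (Lit.neg p)) →
      IndDerives X Θ θ.negate

/-!
Every element of `q` lies in `o ∩ p`, in `o ∩ p̄` or in `q ∩ ō`, so `q` has at most three
elements. Two of them already lie in `r̄`, which leaves room for at most one in `r`.
-/

open Cardinal Set

theorem Cardinal.mk_inter_add_mk_inter_compl {α : Type*} (s t : Set α) :
    #↥(s ∩ t) + #↥(s ∩ tᶜ) = #↥s := by
  rw [← mk_union_of_disjoint (disjoint_compl_right.mono inter_subset_right inter_subset_right),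
    inter_union_compl]

theorem Cardinal.mk_le_mk_inter_add_mk_inter_compl_add_mk_inter_compl {α : Type*}
    (o p q : Set α) : #↥q ≤ #↥(o ∩ p) + #↥(o ∩ pᶜ) + #↥(q ∩ oᶜ) :=
  calc #↥q = #↥(q ∩ o) + #↥(q ∩ oᶜ) := (mk_inter_add_mk_inter_compl q o).symm
    _ ≤ #↥o + #↥(q ∩ oᶜ) := by gcongr; exact mk_le_mk_of_subset inter_subset_right
    _ = #↥(o ∩ p) + #↥(o ∩ pᶜ) + #↥(q ∩ oᶜ) := by rw [mk_inter_add_mk_inter_compl]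

theorem Cardinal.mk_inter_le_of_lt_mk_inter_compl {α : Type*} {s t : Set α} {m n : ℕ}
    (hs : #↥s ≤ m + n + 1) (ht : n < #↥(s ∩ tᶜ)) : #↥(s ∩ t) ≤ m := by
  rw [← add_nat_le_add_nat_iff (n + 1)]
  push_cast
  calc #↥(s ∩ t) + (n + 1) ≤ #↥(s ∩ t) + #↥(s ∩ tᶜ) := by
        gcongr; exact natCast_add_one_le_iff.2 ht
    _ = #↥s := mk_inter_add_mk_inter_compl s t
    _ ≤ m + (n + 1) := by rwa [← add_assoc]

theorem example_entailment_general (A : Type) (o p q r : Set A)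
    (h1 : Cardinal.mk ↥(o ∩ p) ≤ 1)
    (h2 : Cardinal.mk ↥(o ∩ pᶜ) ≤ 1)
    (h3 : Cardinal.mk ↥(q ∩ oᶜ) ≤ 1)
    (h4 : 1 < Cardinal.mk ↥(q ∩ rᶜ)) :
    Cardinal.mk ↥(q ∩ r) ≤ 1 := by
  have hq : #↥q ≤ 1 + 1 + 1 :=
    (mk_le_mk_inter_add_mk_inter_compl_add_mk_inter_compl o p q).trans (by gcongr)
  exact_mod_cast mk_inter_le_of_lt_mk_inter_compl (m := 1) (n := 1) (by exact_mod_cast hq)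
    (by exact_mod_cast h4)

/-- {∃_{≤1}(o,p), ∃_{≤1}(o,p̄), ∃_{≤1}(q,ō), ∃_{>1}(q,r̄)} ⊨ ∃_{≤1}(q,r). -/
theorem example_entailment (A : Type) [Nonempty A] (o p q r : Set A)
    (h1 : Cardinal.mk ↥(o ∩ p) ≤ 1)
    (h2 : Cardinal.mk ↥(o ∩ pᶜ) ≤ 1)
    (h3 : Cardinal.mk ↥(q ∩ oᶜ) ≤ 1)
    (h4 : 1 < Cardinal.mk ↥(q ∩ rᶜ)) :
    Cardinal.mk ↥(q ∩ r) ≤ 1 :=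
  example_entailment_general A o p q r h1 h2 h3 h4
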